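/- arXiv:1203.3002 — 4 statements merged into one kernel-verified Lean document; each statement's English description precedes it below -/
import Mathlib

section
/- Let f : ℝⁿ → ℝ be a convex differentiable function and Ψ : ℝⁿ → ℝ a convex function, and set φ = f + Ψ. Fix L > 0 and y ∈ ℝⁿ, define ψ_L(y;x) = f(y) + ⟨∇f(y), x − y⟩ + (L/2)‖x − y‖₂² + Ψ(x), let T_L(y) be a minimizer of x ↦ ψ_L(y;x), and set g_L(y) = L(y − T_L(y)). Then ψ_L(y; T_L(y)) ≤ φ(y) − (1/(2L))‖g_L(y)‖₂². -/
/-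
The model `ψ = ψ_L(y; ·)` is `Ψ` plus an affine function plus `L / 2 * ‖· - y‖ ^ 2`, hence
`L`-strongly convex. A minimizer `T` of an `L`-strongly convex function grows at least
quadratically away from it, `ψ T + L / 2 * ‖x - T‖ ^ 2 ≤ ψ x`; at `x = y` this is the claim, since
`ψ y = f y + Ψ y` and `‖L • (y - T)‖ ^ 2 / (2 * L) = L / 2 * ‖y - T‖ ^ 2`.
-/

open scoped BigOperators
open Matrix

noncomputable section

namespace PGH

/-- Euclidean dot product on `Fin n → ℝ`. -/
def dot {n : ℕ} (x y : Fin n → ℝ) : ℝ := ∑ i, x i * y i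

/-- Squared Euclidean norm. -/
def sqnorm {n : ℕ} (x : Fin n → ℝ) : ℝ := ∑ i, (x i) ^ 2

/-- Euclidean (ℓ₂) norm. -/
noncomputable def l2 {n : ℕ} (x : Fin n → ℝ) : ℝ := Real.sqrt (sqnorm x)

/-- ℓ₁ norm. -/
def l1 {n : ℕ} (x : Fin n → ℝ) : ℝ := ∑ i, |x i|

/-- ℓ∞ norm (maximum absolute coordinate). -/
noncomputable def linf {n : ℕ} (x : Fin n → ℝ) : ℝ := ⨆ i, |x i|

/-- Support of a vector. -/
def supp {n : ℕ} (x : Fin n → ℝ) : Finset (Fin n) := Finset.univ.filter (fun i => x i ≠ 0)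

/-- Number of nonzero coordinates. -/
def l0 {n : ℕ} (x : Fin n → ℝ) : ℕ := (supp x).card

/-- Number of nonzero coordinates within the index set `S`
(i.e. `‖x_S‖₀` for the restriction of `x` to `S`). -/
def l0on {n : ℕ} (S : Finset (Fin n)) (x : Fin n → ℝ) : ℕ :=
  (S.filter (fun i => x i ≠ 0)).card

/-- ℓ₁ norm of the restriction of `x` to the index set `S`. -/
def l1on {n : ℕ} (S : Finset (Fin n)) (x : Fin n → ℝ) : ℝ := ∑ i ∈ S, |x i|

/-- Gradient of `f(x) = (1/2)‖Ax - b‖₂²`, namely `Aᵀ(Ax - b)`. -/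
def grad {m n : ℕ} (A : Matrix (Fin m) (Fin n) ℝ) (b : Fin m → ℝ) (x : Fin n → ℝ) :
    Fin n → ℝ :=
  Aᵀ.mulVec (A.mulVec x - b)

/-- Least-squares objective `f(x) = (1/2)‖Ax - b‖₂²`. -/
def fls {m n : ℕ} (A : Matrix (Fin m) (Fin n) ℝ) (b : Fin m → ℝ) (x : Fin n → ℝ) : ℝ :=
  sqnorm (A.mulVec x - b) / 2

/-- ℓ₁-regularized least-squares objective `φ_λ(x) = f(x) + λ‖x‖₁`. -/
def phi {m n : ℕ} (A : Matrix (Fin m) (Fin n) ℝ) (b : Fin m → ℝ) (lam : ℝ)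
    (x : Fin n → ℝ) : ℝ :=
  fls A b x + lam * l1 x

/-- Restricted maximal eigenvalue `ρ₊(A, s)`. -/
noncomputable def rhoPlus {m n : ℕ} (A : Matrix (Fin m) (Fin n) ℝ) (s : ℕ) : ℝ :=
  sSup {r | ∃ x : Fin n → ℝ, x ≠ 0 ∧ l0 x ≤ s ∧ r = sqnorm (A.mulVec x) / sqnorm x}

/-- Restricted minimal eigenvalue `ρ₋(A, s)`. -/
noncomputable def rhoMinus {m n : ℕ} (A : Matrix (Fin m) (Fin n) ℝ) (s : ℕ) : ℝ :=
  sInf {r | ∃ x : Fin n → ℝ, x ≠ 0 ∧ l0 x ≤ s ∧ r = sqnorm (A.mulVec x) / sqnorm x}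

/-- `ξ` is a subgradient of the ℓ₁ norm at `x`. -/
def IsSubgrad {n : ℕ} (x ξ : Fin n → ℝ) : Prop :=
  ∀ i, (x i ≠ 0 → ξ i = Real.sign (x i)) ∧ (x i = 0 → |ξ i| ≤ 1)

/-- Optimality residue `ω_λ(x) = min_{ξ ∈ ∂‖x‖₁} ‖Aᵀ(Ax−b) + λξ‖_∞`. -/
noncomputable def omega {m n : ℕ} (A : Matrix (Fin m) (Fin n) ℝ) (b : Fin m → ℝ)
    (lam : ℝ) (x : Fin n → ℝ) : ℝ :=
  sInf {r | ∃ ξ : Fin n → ℝ, IsSubgrad x ξ ∧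
    r = linf (fun i => grad A b x i + lam * ξ i)}

/-- The local model `ψ_{λ,L}(y; x)`. -/
def psi {m n : ℕ} (A : Matrix (Fin m) (Fin n) ℝ) (b : Fin m → ℝ) (lam L : ℝ)
    (y x : Fin n → ℝ) : ℝ :=
  fls A b y + dot (grad A b y) (x - y) + L / 2 * sqnorm (x - y) + lam * l1 x

/-- The noise-domination condition
`λ ≥ max{4, (γ+1)/((1−δ')γ−(1+δ'))} ⬝ ‖Aᵀz‖_∞`. -/
def noiseCond {m n : ℕ} (A : Matrix (Fin m) (Fin n) ℝ) (z : Fin m → ℝ)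
    (dp gam lam : ℝ) : Prop :=
  lam ≥ max 4 ((gam + 1) / ((1 - dp) * gam - (1 + dp))) * linf (Aᵀ.mulVec z)

end PGH

open Set Filter Topology

section
variable {E : Type*} [NormedAddCommGroup E] [NormedSpace ℝ E]

lemma StrongConvexOn.add_half_mul_norm_sub_sq_le_of_isMinOn {s : Set E} {m : ℝ} {f : E → ℝ}
    {x₀ x : E} (hf : StrongConvexOn s m f) (hmin : IsMinOn f s x₀) (hx₀ : x₀ ∈ s) (hx : x ∈ s) :
    f x₀ + m / 2 * ‖x - x₀‖ ^ 2 ≤ f x := by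
  -- Minimality at the point `t • x + (1 - t) • x₀` of the segment, divided by `t`, gives
  -- `f x₀ + (1 - t) * (m / 2 * ‖x - x₀‖ ^ 2) ≤ f x`; let `t → 0⁺`.
  have hseg : ∀ t ∈ Ioc (0 : ℝ) 1, f x₀ + (1 - t) * (m / 2 * ‖x - x₀‖ ^ 2) ≤ f x := by
    rintro t ⟨ht₀, ht₁⟩
    have hconv := hf.2 hx hx₀ ht₀.le (sub_nonneg.2 ht₁) (add_sub_cancel t 1)
    have hle : f x₀ ≤ f (t • x + (1 - t) • x₀) :=
      hmin (hf.1 hx hx₀ ht₀.le (sub_nonneg.2 ht₁) (add_sub_cancel t 1))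
    rw [smul_eq_mul, smul_eq_mul] at hconv
    nlinarith
  have hlim : Tendsto (fun t : ℝ ↦ f x₀ + (1 - t) * (m / 2 * ‖x - x₀‖ ^ 2)) (𝓝[>] 0)
      (𝓝 (f x₀ + m / 2 * ‖x - x₀‖ ^ 2)) := by
    refine tendsto_nhdsWithin_of_tendsto_nhds ?_
    have hcont : Continuous fun t : ℝ ↦ f x₀ + (1 - t) * (m / 2 * ‖x - x₀‖ ^ 2) := by fun_prop
    simpa using hcont.tendsto 0
  exact le_of_tendsto hlim (eventually_of_mem (Ioc_mem_nhdsGT one_pos) hseg)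

end

section
variable {E : Type*} [NormedAddCommGroup E] [InnerProductSpace ℝ E]

lemma ConvexOn.strongConvexOn_add_inner_add_half_mul_norm_sub_sq {Ψ : E → ℝ}
    (hΨ : ConvexOn ℝ univ Ψ) (c : ℝ) (g y : E) (L : ℝ) :
    StrongConvexOn univ L fun x ↦ c + inner ℝ g (x - y) + L / 2 * ‖x - y‖ ^ 2 + Ψ x := by
  -- Subtracting `L / 2 * ‖x‖ ^ 2` leaves `Ψ` plus an affine function.
  have haffine : (fun x ↦ c + inner ℝ g (x - y) + L / 2 * ‖x - y‖ ^ 2 + Ψ x - L / 2 * ‖x‖ ^ 2) =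
      fun x ↦ (c - inner ℝ g y + L / 2 * ‖y‖ ^ 2) + innerₛₗ ℝ (g - L • y) x + Ψ x := by
    funext x
    rw [innerₛₗ_apply_apply, norm_sub_sq_real, inner_sub_right, inner_sub_left, real_inner_smul_left,
      real_inner_comm x y]
    ring
  rw [strongConvexOn_iff_convex, haffine]
  exact ((convexOn_const _ convex_univ).add ((innerₛₗ ℝ (g - L • y)).convexOn convex_univ)).add hΨ

end

namespace PGH

theorem stmt0_general {n : ℕ} (f Ψ : EuclideanSpace ℝ (Fin n) → ℝ)
    (f' : EuclideanSpace ℝ (Fin n) → EuclideanSpace ℝ (Fin n))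
    (hΨ : ConvexOn ℝ Set.univ Ψ)
    (L : ℝ) (y : EuclideanSpace ℝ (Fin n))
    (ψ : EuclideanSpace ℝ (Fin n) → ℝ)
    (hψ : ∀ x, ψ x = f y + (inner ℝ (f' y) (x - y) : ℝ) + L / 2 * ‖x - y‖ ^ 2 + Ψ x)
    (T : EuclideanSpace ℝ (Fin n)) (hT : ∀ x, ψ T ≤ ψ x) :
    ψ T ≤ (f y + Ψ y) - 1 / (2 * L) * ‖L • (y - T)‖ ^ 2 := by
  have hstrong : StrongConvexOn Set.univ L ψ := by
    rw [funext hψ]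
    exact hΨ.strongConvexOn_add_inner_add_half_mul_norm_sub_sq (f y) (f' y) y L
  have hgrowth := hstrong.add_half_mul_norm_sub_sq_le_of_isMinOn (fun x _ ↦ hT x)
    (mem_univ T) (mem_univ y)
  have hψy : ψ y = f y + Ψ y := by simp [hψ]
  have hgrad : 1 / (2 * L) * ‖L • (y - T)‖ ^ 2 = L / 2 * ‖y - T‖ ^ 2 := by
    rw [norm_smul, Real.norm_eq_abs, mul_pow, sq_abs]
    rcases eq_or_ne L 0 with rfl | hL
    · simp
    · field_simp
  linarith

theorem stmt0 {n : ℕ} (f Ψ : EuclideanSpace ℝ (Fin n) → ℝ)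
    (f' : EuclideanSpace ℝ (Fin n) → EuclideanSpace ℝ (Fin n))
    (hf : ConvexOn ℝ Set.univ f) (hΨ : ConvexOn ℝ Set.univ Ψ)
    (hf' : ∀ x, HasGradientAt f (f' x) x)
    (L : ℝ) (hL : 0 < L) (y : EuclideanSpace ℝ (Fin n))
    (ψ : EuclideanSpace ℝ (Fin n) → ℝ)
    (hψ : ∀ x, ψ x = f y + (inner ℝ (f' y) (x - y) : ℝ) + L / 2 * ‖x - y‖ ^ 2 + Ψ x)
    (T : EuclideanSpace ℝ (Fin n)) (hT : ∀ x, ψ T ≤ ψ x) :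
    ψ T ≤ (f y + Ψ y) - 1 / (2 * L) * ‖L • (y - T)‖ ^ 2 :=
  stmt0_general f Ψ f' hΨ L y ψ hψ T hT

end PGH
end
end

section
/- Fix λ > 0, L > 0 and y ∈ ℝⁿ, and let T = T_{λ,L}(y). Then: (i) ω_λ(T) ≤ (1 + ‖A‖_op²/L) · ‖g_{λ,L}(y)‖₂, where ‖A‖_op is the operator norm of A (so ‖A‖_op² is the Lipschitz constant of x ↦ Aᵀ(Ax−b)); and (ii) if T ≠ y, then ω_λ(T) ≤ (1 + S/L) · ‖g_{λ,L}(y)‖₂, where S = ‖AᵀA(T − y)‖₂ / ‖T − y‖₂. -/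
open scoped BigOperators
open Matrix

noncomputable section

namespace PGH

/-- Operator norm of `A` with respect to Euclidean norms. -/
noncomputable def opNorm {m n : ℕ} (A : Matrix (Fin m) (Fin n) ℝ) : ℝ :=
  sSup {r | ∃ x : Fin n → ℝ, x ≠ 0 ∧ r = l2 (A.mulVec x) / l2 x}

/-! Since `ψ_{λ,L}(y; ·)` is separable, minimality of `T` along each coordinate is the
first-order condition of a scalar problem `t ↦ c t + (L/2) t² + λ|t|`, which makes
`ξ = -(∇f(y) + L(T - y))/λ` a subgradient of `‖·‖₁` at `T`. For this `ξ`,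
`∇f(T) + λξ = AᵀA(T - y) + L(y - T)`, so `ω_λ(T) ≤ ‖AᵀA(T - y)‖₂ + ‖g_{λ,L}(y)‖₂`; both bounds
follow from `‖g_{λ,L}(y)‖₂ = L‖T - y‖₂` and `‖AᵀA‖ = ‖A‖²`. -/

section Norms

variable {n : ℕ}

lemma l2_eq_norm (x : Fin n → ℝ) : l2 x = ‖WithLp.toLp 2 x‖ := by
  simp [l2, sqnorm, EuclideanSpace.norm_eq]

lemma abs_le_l2 (x : Fin n → ℝ) (i : Fin n) : |x i| ≤ l2 x := by
  simpa [l2_eq_norm] using PiLp.norm_apply_le (WithLp.toLp 2 x) i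

lemma linf_le_l2 (x : Fin n → ℝ) : linf x ≤ l2 x :=
  Real.iSup_le (abs_le_l2 x) (by rw [l2_eq_norm]; positivity)

lemma l2_add_le (x y : Fin n → ℝ) : l2 (x + y) ≤ l2 x + l2 y := by
  simpa [l2_eq_norm] using norm_add_le (WithLp.toLp 2 x) (WithLp.toLp 2 y)

lemma l2_const_mul (c : ℝ) (x : Fin n → ℝ) : l2 (fun i => c * x i) = |c| * l2 x := by
  rw [l2_eq_norm, l2_eq_norm, ← Real.norm_eq_abs, ← norm_smul]
  rfl

lemma l2_pos {x : Fin n → ℝ} (hx : x ≠ 0) : 0 < l2 x := by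
  simpa [l2_eq_norm] using hx

end Norms

section OperatorNorm

open scoped Matrix.Norms.L2Operator

variable {m n : ℕ} (A : Matrix (Fin m) (Fin n) ℝ)

lemma l2_mulVec_le (x : Fin n → ℝ) : l2 (A *ᵥ x) ≤ ‖A‖ * l2 x := by
  simpa [l2_eq_norm] using A.l2_opNorm_mulVec (WithLp.toLp 2 x)

lemma l2_opNorm_le_opNorm : ‖A‖ ≤ opNorm A := by
  have hbdd : BddAbove {r | ∃ x : Fin n → ℝ, x ≠ 0 ∧ r = l2 (A *ᵥ x) / l2 x} := by
    refine ⟨‖A‖, ?_⟩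
    rintro _ ⟨x, hx, rfl⟩
    exact div_le_of_le_mul₀ (l2_pos hx).le (norm_nonneg A) (l2_mulVec_le A x)
  have hratio : ∀ x : Fin n → ℝ, x ≠ 0 → l2 (A *ᵥ x) ≤ opNorm A * l2 x := fun x hx =>
    (div_le_iff₀ (l2_pos hx)).mp (le_csSup hbdd ⟨x, hx, rfl⟩)
  have hnonneg : 0 ≤ opNorm A := Real.sSup_nonneg fun _ ⟨_, _, hr⟩ =>
    hr ▸ div_nonneg (Real.sqrt_nonneg _) (Real.sqrt_nonneg _)
  rw [l2_opNorm_def]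
  refine ContinuousLinearMap.opNorm_le_bound _ hnonneg fun x => ?_
  rcases eq_or_ne x 0 with rfl | hx
  · simp
  · have hx' : x.ofLp ≠ 0 := by simpa using hx
    have := hratio x.ofLp hx'
    rw [l2_eq_norm, l2_eq_norm, WithLp.toLp_ofLp] at this
    exact this

lemma l2_transpose_mulVec_mulVec_le (x : Fin n → ℝ) :
    l2 (Aᵀ *ᵥ (A *ᵥ x)) ≤ opNorm A ^ 2 * l2 x := calc
  l2 (Aᵀ *ᵥ (A *ᵥ x)) = l2 ((Aᴴ * A) *ᵥ x) := by
    rw [mulVec_mulVec, conjTranspose_eq_transpose_of_trivial]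
  _ ≤ ‖Aᴴ * A‖ * l2 x := l2_mulVec_le _ x
  _ = ‖A‖ ^ 2 * l2 x := by rw [l2_opNorm_conjTranspose_mul_self, sq]
  _ ≤ opNorm A ^ 2 * l2 x := by
    gcongr
    · exact Real.sqrt_nonneg _
    · exact l2_opNorm_le_opNorm A

end OperatorNorm

lemma sum_apply_add_single_sub {ι M G : Type*} [Fintype ι] [DecidableEq ι] [AddZeroClass M]
    [AddCommGroup G] (F : ι → M → G) (x : ι → M) (i : ι) (ε : M) :
    ∑ j, F j ((x + Pi.single i ε : ι → M) j) - ∑ j, F j (x j) =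
      F i (x i + ε) - F i (x i) := by
  rw [← Finset.sum_sub_distrib, Finset.sum_eq_single i (fun j _ hj => by simp [hj])
    (by simp)]
  simp

section ScalarSubproblem

lemma nonneg_of_forall_Ioo_mul_add_sq_nonneg {k C r : ℝ} (hr : 0 < r)
    (h : ∀ ε ∈ Set.Ioo 0 r, 0 ≤ k * ε + C * ε ^ 2) : 0 ≤ k := by
  have hlim : Filter.Tendsto (fun ε => k + C * ε) (nhdsWithin 0 (Set.Ioi 0)) (nhds k) := by
    have : Continuous (fun ε : ℝ => k + C * ε) := by fun_prop
    simpa using (this.tendsto 0).mono_left nhdsWithin_le_nhds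
  refine ge_of_tendsto hlim ?_
  filter_upwards [Ioo_mem_nhdsGT hr] with ε hε
  have hε0 : 0 < ε := hε.1
  have := h ε hε
  nlinarith

lemma abs_add_of_abs_le {a ε : ℝ} (h : |ε| ≤ |a|) : |a + ε| = |a| + Real.sign a * ε := by
  rcases lt_trichotomy a 0 with ha | rfl | ha
  · rw [abs_of_neg ha] at h ⊢
    rw [Real.sign_of_neg ha, abs_of_nonpos (by linarith [le_abs_self ε])]
    ring
  · simp_all
  · rw [abs_of_pos ha] at h ⊢
    rw [Real.sign_of_pos ha, abs_of_nonneg (by linarith [neg_abs_le ε])]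
    ring

variable {d L lam a : ℝ}
  (hmin : ∀ ε, 0 ≤ d * ε + L / 2 * ε ^ 2 + lam * (|a + ε| - |a|))
include hmin

lemma eq_neg_mul_sign_of_forall_nonneg (ha : a ≠ 0) : d = -(lam * Real.sign a) := by
  have hpos : 0 < |a| := abs_pos.mpr ha
  have hside : ∀ σ : ℝ, |σ| = 1 → 0 ≤ σ * (d + lam * Real.sign a) := fun σ hσ => by
    refine nonneg_of_forall_Ioo_mul_add_sq_nonneg (C := L / 2) hpos fun ε ⟨hε0, hεa⟩ => ?_
    have := hmin (σ * ε)
    rw [abs_add_of_abs_le (by rw [abs_mul, hσ, one_mul, abs_of_pos hε0]; exact hεa.le)] at this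
    have hσ2 : σ ^ 2 = 1 := by rw [← sq_abs, hσ, one_pow]
    linear_combination this + L / 2 * ε ^ 2 * hσ2
  have h1 := hside 1 (by simp)
  have h2 := hside (-1) (by simp)
  linarith

lemma abs_le_of_forall_nonneg (ha : a = 0) : |d| ≤ lam := by
  subst ha
  have hside : ∀ σ : ℝ, |σ| = 1 → 0 ≤ σ * d + lam := fun σ hσ => by
    refine nonneg_of_forall_Ioo_mul_add_sq_nonneg (C := L / 2) one_pos fun ε ⟨hε0, _⟩ => ?_
    have := hmin (σ * ε)
    rw [zero_add, abs_zero, sub_zero, abs_mul, hσ, one_mul, abs_of_pos hε0] at this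
    have hσ2 : σ ^ 2 = 1 := by rw [← sq_abs, hσ, one_pow]
    linear_combination this + L / 2 * ε ^ 2 * hσ2
  have h1 := hside 1 (by simp)
  have h2 := hside (-1) (by simp)
  exact abs_le.mpr ⟨by linarith, by linarith⟩

end ScalarSubproblem

variable {m n : ℕ} (A : Matrix (Fin m) (Fin n) ℝ) (b : Fin m → ℝ)

lemma psi_add_single_sub (lam L : ℝ) (y x : Fin n → ℝ) (i : Fin n) (ε : ℝ) :
    psi A b lam L y (x + Pi.single i ε) - psi A b lam L y x =
      (grad A b y i + L * (x i - y i)) * ε + L / 2 * ε ^ 2 + lam * (|x i + ε| - |x i|) := by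
  have hdot := sum_apply_add_single_sub (fun j s => grad A b y j * (s - y j)) x i ε
  have hsq := sum_apply_add_single_sub (fun j s => (s - y j) ^ 2) x i ε
  have habs := sum_apply_add_single_sub (fun _ s => |s|) x i ε
  simp only [psi, dot, sqnorm, l1, Pi.sub_apply] at hdot hsq habs ⊢
  linear_combination hdot + L / 2 * hsq + lam * habs

lemma grad_sub_grad (x y : Fin n → ℝ) : grad A b x - grad A b y = Aᵀ *ᵥ (A *ᵥ (x - y)) := by
  rw [grad, grad, ← mulVec_sub, sub_sub_sub_cancel_right, ← mulVec_sub]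

lemma omega_le_linf {lam : ℝ} {x ξ : Fin n → ℝ} (hξ : IsSubgrad x ξ) :
    omega A b lam x ≤ linf (fun i => grad A b x i + lam * ξ i) :=
  csInf_le ⟨0, fun _ ⟨_, _, hr⟩ => hr ▸ Real.iSup_nonneg fun _ => abs_nonneg _⟩ ⟨ξ, hξ, rfl⟩

section ProximalPoint

variable {A b} {lam L : ℝ} {y T : Fin n → ℝ}
  (hT : ∀ u, psi A b lam L y T ≤ psi A b lam L y u)
include hT

lemma increment_nonneg_of_forall_psi_le (i : Fin n) (ε : ℝ) :
    0 ≤ (grad A b y i + L * (T i - y i)) * ε + L / 2 * ε ^ 2 + lam * (|T i + ε| - |T i|) := by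
  rw [← psi_add_single_sub, sub_nonneg]
  exact hT _

lemma isSubgrad_of_forall_psi_le (hlam : 0 < lam) :
    IsSubgrad T (fun i => -(grad A b y i + L * (T i - y i)) / lam) := fun i => by
  have hmin := increment_nonneg_of_forall_psi_le hT i
  refine ⟨fun hTi => ?_, fun hTi => ?_⟩ <;> dsimp only
  · rw [eq_neg_mul_sign_of_forall_nonneg hmin hTi]
    field_simp
  · rw [abs_div, abs_neg, abs_of_pos hlam, div_le_one hlam]
    exact abs_le_of_forall_nonneg hmin hTi

lemma omega_le_of_forall_psi_le (hlam : 0 < lam) :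
    omega A b lam T ≤ l2 (Aᵀ *ᵥ (A *ᵥ (T - y))) + l2 (fun i => L * (y i - T i)) := calc
  omega A b lam T ≤
      linf (fun i => grad A b T i + lam * (-(grad A b y i + L * (T i - y i)) / lam)) :=
    omega_le_linf A b (isSubgrad_of_forall_psi_le hT hlam)
  _ = linf (Aᵀ *ᵥ (A *ᵥ (T - y)) + fun i => L * (y i - T i)) := by
    congr 1
    ext i
    rw [← grad_sub_grad]
    field_simp
    simp only [Pi.add_apply, Pi.sub_apply]
    ring
  _ ≤ l2 (Aᵀ *ᵥ (A *ᵥ (T - y)) + fun i => L * (y i - T i)) := linf_le_l2 _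
  _ ≤ l2 (Aᵀ *ᵥ (A *ᵥ (T - y))) + l2 (fun i => L * (y i - T i)) := l2_add_le _ _

end ProximalPoint

theorem stmt1 {m n : ℕ} (A : Matrix (Fin m) (Fin n) ℝ) (b : Fin m → ℝ)
    (lam L : ℝ) (hlam : 0 < lam) (hL : 0 < L) (y T : Fin n → ℝ)
    (hT : ∀ u, psi A b lam L y T ≤ psi A b lam L y u) :
    omega A b lam T ≤ (1 + opNorm A ^ 2 / L) * l2 (fun i => L * (y i - T i)) ∧
    (T ≠ y →
      omega A b lam T ≤
        (1 + (l2 (Aᵀ.mulVec (A.mulVec (T - y))) / l2 (T - y)) / L) *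
          l2 (fun i => L * (y i - T i))) := by
  have hstep : l2 (fun i => L * (y i - T i)) = L * l2 (T - y) := by
    have hneg : (fun i => L * (y i - T i)) = fun i => -L * (T - y) i := by
      ext i
      rw [Pi.sub_apply]
      ring
    rw [hneg, l2_const_mul, abs_neg, abs_of_pos hL]
  have hω := omega_le_of_forall_psi_le hT hlam
  rw [hstep] at hω ⊢
  constructor
  · calc omega A b lam T ≤ opNorm A ^ 2 * l2 (T - y) + L * l2 (T - y) := by
          linarith [l2_transpose_mulVec_mulVec_le A (T - y)]
      _ = (1 + opNorm A ^ 2 / L) * (L * l2 (T - y)) := by field_simp; ring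
  · intro hTy
    have hpos : 0 < l2 (T - y) := l2_pos (sub_ne_zero.mpr hTy)
    calc omega A b lam T ≤ l2 (Aᵀ *ᵥ (A *ᵥ (T - y))) + L * l2 (T - y) := hω
      _ = _ := by field_simp; ring

end PGH
end
end

section
/- Assume b = A x̄ + z, and let δ' ∈ (0,1), γ > (1+δ')/(1−δ'), and λ > 0 satisfy λ ≥ max{4, (γ+1)/((1−δ')γ − (1+δ'))} · ‖Aᵀz‖_∞. Let s̃ ≥ 1 be an integer with ρ₋(A, s̄+s̃) > 0. If x ∈ ℝⁿ satisfies ‖x_{S̄ᶜ}‖₀ ≤ s̃ and there exists ξ ∈ ∂‖x‖₁ with ‖Aᵀ(Ax − b) + λξ‖_∞ ≤ δ'λ, then: (i) ‖(x − x̄)_{S̄ᶜ}‖₁ ≤ γ ‖(x − x̄)_{S̄}‖₁; (ii) ‖x − x̄‖₂ ≤ 2λ√s̄ / ρ₋(A, s̄+s̃); and (iii) φ_λ(x) ≤ φ_λ(x̄) + 2δ'(1+γ)λ² s̄ / ρ₋(A, s̄+s̃). -/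
/-!
Put `h = x - x̄`. Pairing the optimality residue `∇f(x) + λξ` with `h`, using
`⟨∇f(x), h⟩ = ‖Ah‖₂² - ⟨Aᵀz, h⟩` and `⟨ξ, h⟩ ≥ ‖h_{S̄ᶜ}‖₁ - ‖h_{S̄}‖₁`, gives the basic inequality
`‖Ah‖₂² + λ (‖h_{S̄ᶜ}‖₁ - ‖h_{S̄}‖₁) ≤ (δ'λ + ‖Aᵀz‖_∞) ‖h‖₁`.
The noise condition makes `‖Aᵀz‖_∞` small against `λ`, so this forces `h` into the cone (i) and
gives `‖Ah‖₂² ≤ 2λ ‖h_{S̄}‖₁ ≤ 2λ √s̄ ‖h‖₂`. As `h` has at most `s̄ + s̃` nonzero entries,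
`‖Ah‖₂² ≥ ρ₋ ‖h‖₂²`, which is (ii). Convexity of `φ_λ` gives
`φ_λ(x) - φ_λ(x̄) ≤ ⟨∇f(x) + λξ, h⟩ ≤ δ'λ ‖h‖₁ ≤ δ'λ (1 + γ) √s̄ ‖h‖₂`,
and (ii) turns this into (iii).
-/

open scoped BigOperators
open Matrix

noncomputable section

namespace PGH

lemma dot_eq_dotProduct {n : ℕ} (x y : Fin n → ℝ) : dot x y = x ⬝ᵥ y := rfl

lemma sqnorm_eq_dotProduct {n : ℕ} (x : Fin n → ℝ) : sqnorm x = x ⬝ᵥ x := by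
  simp only [sqnorm, dotProduct, sq]

lemma sqnorm_nonneg {n : ℕ} (x : Fin n → ℝ) : 0 ≤ sqnorm x :=
  Finset.sum_nonneg fun _ _ => sq_nonneg _

lemma sq_l2 {n : ℕ} (x : Fin n → ℝ) : l2 x ^ 2 = sqnorm x :=
  Real.sq_sqrt (sqnorm_nonneg x)

lemma l1on_nonneg {n : ℕ} (S : Finset (Fin n)) (x : Fin n → ℝ) : 0 ≤ l1on S x :=
  Finset.sum_nonneg fun _ _ => abs_nonneg _

lemma l1_nonneg {n : ℕ} (x : Fin n → ℝ) : 0 ≤ l1 x :=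
  Finset.sum_nonneg fun _ _ => abs_nonneg _

lemma l1on_add_l1on_compl {n : ℕ} (S : Finset (Fin n)) (x : Fin n → ℝ) :
    l1on S x + l1on Sᶜ x = l1 x :=
  Finset.sum_add_sum_compl S _

lemma l1on_le_sqrt_card_mul_l2 {n : ℕ} (S : Finset (Fin n)) (x : Fin n → ℝ) :
    l1on S x ≤ Real.sqrt S.card * l2 x := by
  have hsq : l1on S x ^ 2 ≤ S.card * sqnorm x :=
    calc l1on S x ^ 2 ≤ S.card * ∑ i ∈ S, |x i| ^ 2 := sq_sum_le_card_mul_sum_sq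
      _ ≤ S.card * sqnorm x := by
        simp only [sq_abs, sqnorm]
        exact mul_le_mul_of_nonneg_left (Finset.sum_le_sum_of_subset_of_nonneg
          (Finset.subset_univ S) fun i _ _ => sq_nonneg (x i)) (Nat.cast_nonneg _)
  rw [l2, ← Real.sqrt_mul (Nat.cast_nonneg _)]
  exact Real.le_sqrt_of_sq_le hsq

lemma dot_add_mul {n : ℕ} (u v w : Fin n → ℝ) (c : ℝ) :
    dot (fun i => u i + c * v i) w = dot u w + c * dot v w := by
  simp only [dot, add_mul, Finset.sum_add_distrib, Finset.mul_sum, mul_assoc]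

lemma abs_le_linf {n : ℕ} (v : Fin n → ℝ) (i : Fin n) : |v i| ≤ linf v :=
  le_ciSup (Set.finite_range fun j => |v j|).bddAbove i

lemma linf_nonneg {n : ℕ} (v : Fin n → ℝ) : 0 ≤ linf v :=
  Real.iSup_nonneg fun _ => abs_nonneg _

lemma dot_le_linf_mul_l1 {n : ℕ} (v x : Fin n → ℝ) : dot v x ≤ linf v * l1 x := by
  rw [dot, l1, Finset.mul_sum]
  refine Finset.sum_le_sum fun i _ => ?_
  calc v i * x i ≤ |v i| * |x i| := by rw [← abs_mul]; exact le_abs_self _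
    _ ≤ linf v * |x i| := by gcongr; exact abs_le_linf v i

lemma eq_zero_of_notMem_supp {n : ℕ} {x : Fin n → ℝ} {i : Fin n} (hi : i ∉ supp x) :
    x i = 0 := by
  simpa [supp] using hi

lemma l0_sub_le {n : ℕ} {S : Finset (Fin n)} {y : Fin n → ℝ} (hy : ∀ i ∉ S, y i = 0)
    (x : Fin n → ℝ) : l0 (x - y) ≤ S.card + l0on Sᶜ x := by
  calc l0 (x - y) ≤ (S ∪ Sᶜ.filter fun i => x i ≠ 0).card := by
        refine Finset.card_le_card fun i hi => ?_
        by_cases hiS : i ∈ S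
        · exact Finset.mem_union_left _ hiS
        · have hxy : x i - y i ≠ 0 := (Finset.mem_filter.mp hi).2
          rw [hy i hiS, sub_zero] at hxy
          exact Finset.mem_union_right _ (by simpa [hiS] using hxy)
    _ ≤ S.card + l0on Sᶜ x := Finset.card_union_le _ _

namespace IsSubgrad

variable {n : ℕ} {x ξ : Fin n → ℝ}

lemma abs_le_one (hξ : IsSubgrad x ξ) (i : Fin n) : |ξ i| ≤ 1 := by
  by_cases hx : x i = 0
  · exact (hξ i).2 hx
  · rw [(hξ i).1 hx]
    rcases Real.sign_apply_eq (x i) with h | h | h <;> simp [h]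

lemma mul_self_eq_abs (hξ : IsSubgrad x ξ) (i : Fin n) : ξ i * x i = |x i| := by
  rcases lt_trichotomy (x i) 0 with h | h | h
  · rw [(hξ i).1 h.ne, Real.sign_of_neg h, abs_of_neg h]; ring
  · simp [h]
  · rw [(hξ i).1 h.ne', Real.sign_of_pos h, abs_of_pos h]; ring

lemma mul_le_abs (hξ : IsSubgrad x ξ) (i : Fin n) (a : ℝ) : ξ i * a ≤ |a| :=
  calc ξ i * a ≤ |ξ i| * |a| := by rw [← abs_mul]; exact le_abs_self _
    _ ≤ |a| := mul_le_of_le_one_left (abs_nonneg a) (hξ.abs_le_one i)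

lemma l1_sub_le_dot (hξ : IsSubgrad x ξ) (y : Fin n → ℝ) : l1 x - l1 y ≤ dot ξ (x - y) := by
  rw [l1, l1, dot, ← Finset.sum_sub_distrib]
  refine Finset.sum_le_sum fun i _ => ?_
  rw [Pi.sub_apply, mul_sub, hξ.mul_self_eq_abs]
  linarith [hξ.mul_le_abs i (y i)]

lemma l1on_compl_sub_l1on_le_dot (hξ : IsSubgrad x ξ) {S : Finset (Fin n)} {y : Fin n → ℝ}
    (hy : ∀ i ∉ S, y i = 0) : l1on Sᶜ (x - y) - l1on S (x - y) ≤ dot ξ (x - y) := by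
  have hout : l1on Sᶜ (x - y) = ∑ i ∈ Sᶜ, ξ i * (x - y) i :=
    Finset.sum_congr rfl fun i hi => by
      rw [Pi.sub_apply, hy i (Finset.mem_compl.mp hi), sub_zero, hξ.mul_self_eq_abs]
  have hin : -l1on S (x - y) ≤ ∑ i ∈ S, ξ i * (x - y) i := by
    rw [l1on, ← Finset.sum_neg_distrib]
    refine Finset.sum_le_sum fun i _ => ?_
    have := hξ.mul_le_abs i (y i - x i)
    rw [abs_sub_comm] at this
    simp only [Pi.sub_apply]
    linarith [show ξ i * (y i - x i) = -(ξ i * (x i - y i)) by ring]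
  rw [dot, ← Finset.sum_add_sum_compl S]
  linarith

end IsSubgrad

section LeastSquares

variable {m n : ℕ} (A : Matrix (Fin m) (Fin n) ℝ) (b : Fin m → ℝ)

lemma dot_grad (x h : Fin n → ℝ) : dot (grad A b x) h = (A *ᵥ x - b) ⬝ᵥ (A *ᵥ h) := by
  rw [dot_eq_dotProduct, grad, mulVec_transpose, dotProduct_mulVec]

lemma fls_eq_add_dot_grad (x y : Fin n → ℝ) :
    fls A b y = fls A b x + dot (grad A b x) (y - x) + sqnorm (A *ᵥ (y - x)) / 2 := by
  have hy : A *ᵥ y - b = (A *ᵥ x - b) + A *ᵥ (y - x) := by rw [mulVec_sub]; abel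
  simp only [fls, dot_grad, sqnorm_eq_dotProduct, hy, add_dotProduct, dotProduct_add,
    dotProduct_comm (A *ᵥ (y - x)) (A *ᵥ x - b)]
  ring

lemma fls_sub_le_dot_grad (x y : Fin n → ℝ) :
    fls A b x - fls A b y ≤ dot (grad A b x) (x - y) := by
  have hxy : dot (grad A b x) (y - x) = -dot (grad A b x) (x - y) := by
    rw [← neg_sub, dot_eq_dotProduct, dot_eq_dotProduct, dotProduct_neg]
  linarith [fls_eq_add_dot_grad A b x y, sqnorm_nonneg (A *ᵥ (y - x))]

lemma phi_sub_le_dot {lam : ℝ} (hlam : 0 ≤ lam) {x ξ : Fin n → ℝ} (hξ : IsSubgrad x ξ)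
    (y : Fin n → ℝ) :
    phi A b lam x - phi A b lam y ≤ dot (fun i => grad A b x i + lam * ξ i) (x - y) := by
  rw [phi, phi, dot_add_mul]
  linarith [fls_sub_le_dot_grad A b x y, mul_le_mul_of_nonneg_left (hξ.l1_sub_le_dot y) hlam]

lemma phi_sub_le_mul_l1 {lam r : ℝ} (hlam : 0 ≤ lam) {x ξ : Fin n → ℝ} (hξ : IsSubgrad x ξ)
    (hres : linf (fun i => grad A b x i + lam * ξ i) ≤ r) (y : Fin n → ℝ) :
    phi A b lam x - phi A b lam y ≤ r * l1 (x - y) :=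
  (phi_sub_le_dot A b hlam hξ y).trans
    ((dot_le_linf_mul_l1 _ _).trans (mul_le_mul_of_nonneg_right hres (l1_nonneg _)))

lemma dot_grad_sub_of_eq {xbar : Fin n → ℝ} {z : Fin m → ℝ} (hb : b = A *ᵥ xbar + z)
    (x : Fin n → ℝ) :
    dot (grad A b x) (x - xbar) = sqnorm (A *ᵥ (x - xbar)) - dot (Aᵀ *ᵥ z) (x - xbar) := by
  have hres : A *ᵥ x - b = A *ᵥ (x - xbar) - z := by rw [hb, mulVec_sub]; abel
  rw [dot_grad, hres, sub_dotProduct, sqnorm_eq_dotProduct, dot_eq_dotProduct,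
    mulVec_transpose, dotProduct_mulVec, dotProduct_mulVec]

lemma basic_inequality {xbar : Fin n → ℝ} {z : Fin m → ℝ} (hb : b = A *ᵥ xbar + z)
    {lam : ℝ} (hlam : 0 ≤ lam) {x ξ : Fin n → ℝ} (hξ : IsSubgrad x ξ) :
    sqnorm (A *ᵥ (x - xbar)) + lam * (l1on (supp xbar)ᶜ (x - xbar) - l1on (supp xbar) (x - xbar))
      ≤ (linf (fun i => grad A b x i + lam * ξ i) + linf (Aᵀ *ᵥ z)) * l1 (x - xbar) := by
  have hcone := mul_le_mul_of_nonneg_left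
    (hξ.l1on_compl_sub_l1on_le_dot fun _ => eq_zero_of_notMem_supp (x := xbar)) hlam
  linarith [dot_add_mul (grad A b x) ξ (x - xbar) lam, dot_grad_sub_of_eq A b hb x,
    dot_le_linf_mul_l1 (fun i => grad A b x i + lam * ξ i) (x - xbar),
    dot_le_linf_mul_l1 (Aᵀ *ᵥ z) (x - xbar)]

lemma rhoMinus_mul_sqnorm_le {s : ℕ} {h : Fin n → ℝ} (hh : l0 h ≤ s) :
    rhoMinus A s * sqnorm h ≤ sqnorm (A *ᵥ h) := by
  by_cases h0 : h = 0
  · simp [h0, sqnorm]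
  have hpos : 0 < sqnorm h := by
    obtain ⟨i, hi⟩ := Function.ne_iff.mp h0
    exact Finset.sum_pos' (fun j _ => sq_nonneg _) ⟨i, Finset.mem_univ i, sq_pos_of_ne_zero hi⟩
  have hbdd : BddBelow {r | ∃ y : Fin n → ℝ, y ≠ 0 ∧ l0 y ≤ s ∧
      r = sqnorm (A *ᵥ y) / sqnorm y} := by
    refine ⟨0, ?_⟩
    rintro r ⟨y, -, -, rfl⟩
    exact div_nonneg (sqnorm_nonneg _) (sqnorm_nonneg _)
  rw [← le_div_iff₀ hpos]
  exact csInf_le hbdd ⟨h, h0, hh, rfl⟩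

lemma l2_le_div_rhoMinus {s : ℕ} (hρ : 0 < rhoMinus A s) {h : Fin n → ℝ} (hh : l0 h ≤ s)
    {c : ℝ} (hc : 0 ≤ c) (hA : sqnorm (A *ᵥ h) ≤ c * l2 h) : l2 h ≤ c / rhoMinus A s := by
  rw [le_div_iff₀ hρ]
  have hquad : rhoMinus A s * l2 h ^ 2 ≤ c * l2 h := by
    rw [sq_l2]; exact (rhoMinus_mul_sqnorm_le A hh).trans hA
  rcases (Real.sqrt_nonneg (sqnorm h)).eq_or_lt with h0 | hpos
  · rw [l2, ← h0, zero_mul]; exact hc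
  · nlinarith [hpos]

end LeastSquares

section NoiseCondition

variable {m n : ℕ} {A : Matrix (Fin m) (Fin n) ℝ} {z : Fin m → ℝ} {dp gam lam : ℝ}

lemma noiseCond.add_le_mul (hnoise : noiseCond A z dp gam lam) (hdp1 : dp < 1)
    (hgam : gam > (1 + dp) / (1 - dp)) :
    (1 + dp) * lam + linf (Aᵀ *ᵥ z) ≤ gam * ((1 - dp) * lam - linf (Aᵀ *ᵥ z)) := by
  have hgap : 0 < (1 - dp) * gam - (1 + dp) := by
    have := (div_lt_iff₀ (sub_pos.mpr hdp1)).mp hgam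
    linarith
  have heps := linf_nonneg (Aᵀ *ᵥ z)
  have hk : (gam + 1) / ((1 - dp) * gam - (1 + dp)) * linf (Aᵀ *ᵥ z) ≤ lam :=
    (mul_le_mul_of_nonneg_right (le_max_right _ _) heps).trans hnoise
  rw [div_mul_eq_mul_div, div_le_iff₀ hgap] at hk
  linarith

lemma noiseCond.sub_pos (hnoise : noiseCond A z dp gam lam) (hdp0 : 0 < dp) (hdp1 : dp < 1)
    (hgam : gam > (1 + dp) / (1 - dp)) (hlam : 0 < lam) :
    0 < (1 - dp) * lam - linf (Aᵀ *ᵥ z) := by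
  have hgam0 : 0 < gam := lt_trans (div_pos (by linarith) (by linarith)) hgam
  have heps := linf_nonneg (Aᵀ *ᵥ z)
  have := hnoise.add_le_mul hdp1 hgam
  exact pos_of_mul_pos_right (by nlinarith) hgam0.le

end NoiseCondition

section BasicInequality

/-! In the basic inequality `q + λ (c - a) ≤ (δλ + ε)(a + c)` read `q = ‖Ah‖₂²`,
`a = ‖h_{S̄}‖₁`, `c = ‖h_{S̄ᶜ}‖₁` and `ε = ‖Aᵀz‖_∞`. -/

variable {q a c lam dp eps : ℝ}

lemma le_mul_of_basic_inequality {gam : ℝ}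
    (hbasic : q + lam * (c - a) ≤ (dp * lam + eps) * (a + c))
    (hmargin : 0 < (1 - dp) * lam - eps) (hq : 0 ≤ q) (ha : 0 ≤ a)
    (hgam : (1 + dp) * lam + eps ≤ gam * ((1 - dp) * lam - eps)) : c ≤ gam * a := by
  refine le_of_mul_le_mul_left ?_ hmargin
  nlinarith

lemma le_two_mul_of_basic_inequality
    (hbasic : q + lam * (c - a) ≤ (dp * lam + eps) * (a + c))
    (hmargin : 0 < (1 - dp) * lam - eps) (ha : 0 ≤ a) (hc : 0 ≤ c) : q ≤ 2 * lam * a := by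
  nlinarith

end BasicInequality

theorem stmt3_general {m n : ℕ} (A : Matrix (Fin m) (Fin n) ℝ) (b : Fin m → ℝ)
    (xbar : Fin n → ℝ) (z : Fin m → ℝ) (hb : b = A.mulVec xbar + z)
    (dp gam lam : ℝ) (hdp0 : 0 < dp) (hdp1 : dp < 1)
    (hgam : gam > (1 + dp) / (1 - dp))
    (hlam : 0 < lam) (hnoise : noiseCond A z dp gam lam)
    (st : ℕ)
    (hrho : 0 < rhoMinus A ((supp xbar).card + st))
    (x : Fin n → ℝ) (hxsp : l0on (supp xbar)ᶜ x ≤ st)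
    (hkkt : ∃ ξ : Fin n → ℝ, IsSubgrad x ξ ∧
      linf (fun i => grad A b x i + lam * ξ i) ≤ dp * lam) :
    l1on (supp xbar)ᶜ (x - xbar) ≤ gam * l1on (supp xbar) (x - xbar) ∧
    l2 (x - xbar) ≤ 2 * lam * Real.sqrt ((supp xbar).card : ℝ) /
      rhoMinus A ((supp xbar).card + st) ∧
    phi A b lam x ≤ phi A b lam xbar +
      2 * dp * (1 + gam) * lam ^ 2 * ((supp xbar).card : ℝ) /
        rhoMinus A ((supp xbar).card + st) := by
  obtain ⟨ξ, hξ, hres⟩ := hkkt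
  set S := supp xbar
  set h := x - xbar
  set ρ := rhoMinus A (S.card + st)
  have hbasic : sqnorm (A *ᵥ h) + lam * (l1on Sᶜ h - l1on S h)
      ≤ (dp * lam + linf (Aᵀ *ᵥ z)) * (l1on S h + l1on Sᶜ h) := by
    rw [l1on_add_l1on_compl]
    exact (basic_inequality A b hb hlam.le hξ).trans
      (mul_le_mul_of_nonneg_right (by linarith) (l1_nonneg h))
  have hmargin := hnoise.sub_pos hdp0 hdp1 hgam hlam
  have hcone := le_mul_of_basic_inequality hbasic hmargin (sqnorm_nonneg _) (l1on_nonneg S h)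
    (hnoise.add_le_mul hdp1 hgam)
  have hpred : sqnorm (A *ᵥ h) ≤ 2 * lam * Real.sqrt S.card * l2 h := by
    rw [mul_assoc]
    exact (le_two_mul_of_basic_inequality hbasic hmargin (l1on_nonneg S h) (l1on_nonneg _ _)).trans
      (by gcongr; exact l1on_le_sqrt_card_mul_l2 S h)
  have hsupp : l0 h ≤ S.card + st :=
    (l0_sub_le (S := S) (fun _ => eq_zero_of_notMem_supp) x).trans (by omega)
  have hl2 : l2 h ≤ 2 * lam * Real.sqrt S.card / ρ :=
    l2_le_div_rhoMinus A hrho hsupp (by positivity) hpred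
  refine ⟨hcone, hl2, ?_⟩
  have hS : l1on S h ≤ 2 * lam * S.card / ρ :=
    calc l1on S h ≤ Real.sqrt S.card * l2 h := l1on_le_sqrt_card_mul_l2 S h
      _ ≤ Real.sqrt S.card * (2 * lam * Real.sqrt S.card / ρ) := by gcongr
      _ = 2 * lam * S.card / ρ := by
        linear_combination (2 * lam / ρ) * Real.mul_self_sqrt (Nat.cast_nonneg (α := ℝ) S.card)
  have hgam0 : 0 < gam := (div_pos (by linarith) (by linarith)).trans hgam
  calc phi A b lam x ≤ phi A b lam xbar + dp * lam * l1 h := by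
        linarith [phi_sub_le_mul_l1 A b hlam.le hξ hres xbar]
    _ ≤ phi A b lam xbar + dp * lam * ((1 + gam) * (2 * lam * S.card / ρ)) := by
        rw [← l1on_add_l1on_compl S h]
        gcongr
        linarith [mul_le_mul_of_nonneg_left hS hgam0.le]
    _ = phi A b lam xbar + 2 * dp * (1 + gam) * lam ^ 2 * S.card / ρ := by ring

theorem stmt3 {m n : ℕ} (A : Matrix (Fin m) (Fin n) ℝ) (b : Fin m → ℝ)
    (xbar : Fin n → ℝ) (z : Fin m → ℝ) (hb : b = A.mulVec xbar + z)
    (dp gam lam : ℝ) (hdp0 : 0 < dp) (hdp1 : dp < 1)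
    (hgam : gam > (1 + dp) / (1 - dp))
    (hlam : 0 < lam) (hnoise : noiseCond A z dp gam lam)
    (st : ℕ) (hst : 1 ≤ st)
    (hrho : 0 < rhoMinus A ((supp xbar).card + st))
    (x : Fin n → ℝ) (hxsp : l0on (supp xbar)ᶜ x ≤ st)
    (hkkt : ∃ ξ : Fin n → ℝ, IsSubgrad x ξ ∧
      linf (fun i => grad A b x i + lam * ξ i) ≤ dp * lam) :
    l1on (supp xbar)ᶜ (x - xbar) ≤ gam * l1on (supp xbar) (x - xbar) ∧
    l2 (x - xbar) ≤ 2 * lam * Real.sqrt ((supp xbar).card : ℝ) /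
      rhoMinus A ((supp xbar).card + st) ∧
    phi A b lam x ≤ phi A b lam xbar +
      2 * dp * (1 + gam) * lam ^ 2 * ((supp xbar).card : ℝ) /
        rhoMinus A ((supp xbar).card + st) :=
  stmt3_general A b xbar z hb dp gam lam hdp0 hdp1 hgam hlam hnoise st hrho x hxsp hkkt

end PGH
end
end

section
/- Let 0 < δ < δ' < 1, λ > 0, and suppose x ∈ ℝⁿ satisfies ω_λ(x) ≤ δλ. Let λ' = ηλ where η satisfies (1+δ)/(1+δ') ≤ η < 1. Then ω_{λ'}(x) ≤ δ'λ'. -/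
/-!
For a fixed subgradient `ξ` we have `‖ξ‖_∞ ≤ 1`, so `λ ↦ ‖Aᵀ(Ax − b) + λξ‖_∞` is 1-Lipschitz;
taking infima, `ω_{ηλ}(x) ≤ ω_λ(x) + (1 − η)λ ≤ (1 + δ − η)λ`, and `(1 + δ) ≤ η(1 + δ')` turns
this into `δ'ηλ`.
-/

open scoped BigOperators
open Matrix

noncomputable section

namespace PGH

lemma norm_add_smul_le_of_norm_le_one {E : Type*} [SeminormedAddCommGroup E] [NormedSpace ℝ E]
    (g ξ : E) (hξ : ‖ξ‖ ≤ 1) (lam mu : ℝ) :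
    ‖g + mu • ξ‖ ≤ ‖g + lam • ξ‖ + |lam - mu| := by
  have hsplit : g + mu • ξ = (g + lam • ξ) + (mu - lam) • ξ := by
    rw [add_assoc, ← add_smul]; congr 2; ring
  calc ‖g + mu • ξ‖ ≤ ‖g + lam • ξ‖ + ‖(mu - lam) • ξ‖ := hsplit ▸ norm_add_le _ _
    _ = ‖g + lam • ξ‖ + |lam - mu| * ‖ξ‖ := by rw [norm_smul, Real.norm_eq_abs, abs_sub_comm]
    _ ≤ ‖g + lam • ξ‖ + |lam - mu| := by gcongr; exact mul_le_of_le_one_right (abs_nonneg _) hξ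

lemma linf_eq_norm {n : ℕ} (v : Fin n → ℝ) : linf v = ‖v‖ := by
  refine le_antisymm (Real.iSup_le (fun i => norm_le_pi_norm v i) (norm_nonneg v)) ?_
  refine (pi_norm_le_iff_of_nonneg (Real.iSup_nonneg fun i => abs_nonneg (v i))).mpr fun i => ?_
  exact le_ciSup (Set.finite_range fun j => |v j|).bddAbove i

lemma isSubgrad_sign {n : ℕ} (x : Fin n → ℝ) : IsSubgrad x (fun i => Real.sign (x i)) :=
  fun i => ⟨fun _ => rfl, fun h => by simp [h]⟩

lemma IsSubgrad.norm_le_one {n : ℕ} {x ξ : Fin n → ℝ} (hξ : IsSubgrad x ξ) : ‖ξ‖ ≤ 1 := by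
  refine (pi_norm_le_iff_of_nonneg zero_le_one).mpr fun i => ?_
  rw [Real.norm_eq_abs]
  by_cases hxi : x i = 0
  · exact (hξ i).2 hxi
  · rw [(hξ i).1 hxi]
    rcases Real.sign_apply_eq_of_ne_zero (x i) hxi with h | h <;> simp [h]

lemma omega_le_norm {m n : ℕ} (A : Matrix (Fin m) (Fin n) ℝ) (b : Fin m → ℝ) (lam : ℝ)
    {x ξ : Fin n → ℝ} (hξ : IsSubgrad x ξ) :
    omega A b lam x ≤ ‖grad A b x + lam • ξ‖ := by
  refine csInf_le ⟨0, ?_⟩ ⟨ξ, hξ, (linf_eq_norm _).symm⟩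
  rintro r ⟨ζ, -, rfl⟩
  exact Real.iSup_nonneg fun i => abs_nonneg _

lemma omega_le_omega_add_abs_sub {m n : ℕ} (A : Matrix (Fin m) (Fin n) ℝ) (b : Fin m → ℝ)
    (lam mu : ℝ) (x : Fin n → ℝ) :
    omega A b mu x ≤ omega A b lam x + |lam - mu| := by
  rw [← sub_le_iff_le_add]
  refine le_csInf ⟨_, _, isSubgrad_sign x, rfl⟩ ?_
  rintro r ⟨ξ, hξ, rfl⟩
  rw [sub_le_iff_le_add, linf_eq_norm]
  exact (omega_le_norm A b mu hξ).trans
    (norm_add_smul_le_of_norm_le_one _ _ hξ.norm_le_one lam mu)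

theorem stmt6_general {m n : ℕ} (A : Matrix (Fin m) (Fin n) ℝ) (b : Fin m → ℝ)
    (del dp lam eta : ℝ) (hdel : 0 < del) (hdd : del < dp)
    (hlam : 0 < lam) (x : Fin n → ℝ)
    (hx : omega A b lam x ≤ del * lam)
    (heta1 : (1 + del) / (1 + dp) ≤ eta) (heta2 : eta < 1) :
    omega A b (eta * lam) x ≤ dp * (eta * lam) := by
  have hshift : |lam - eta * lam| = (1 - eta) * lam := by
    rw [← one_sub_mul, abs_of_pos (mul_pos (sub_pos.mpr heta2) hlam)]
  have heta : 1 + del ≤ eta * (1 + dp) := (div_le_iff₀ (by linarith)).mp heta1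
  calc omega A b (eta * lam) x ≤ omega A b lam x + (1 - eta) * lam :=
        hshift ▸ omega_le_omega_add_abs_sub A b lam (eta * lam) x
    _ ≤ (1 + del) * lam - eta * lam := by linarith
    _ ≤ dp * (eta * lam) := by nlinarith

theorem stmt6 {m n : ℕ} (A : Matrix (Fin m) (Fin n) ℝ) (b : Fin m → ℝ)
    (del dp lam eta : ℝ) (hdel : 0 < del) (hdd : del < dp) (hdp : dp < 1)
    (hlam : 0 < lam) (x : Fin n → ℝ)
    (hx : omega A b lam x ≤ del * lam)
    (heta1 : (1 + del) / (1 + dp) ≤ eta) (heta2 : eta < 1) :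
    omega A b (eta * lam) x ≤ dp * (eta * lam) :=
  stmt6_general A b del dp lam eta hdel hdd hlam x hx heta1 heta2

end PGH
end
end
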